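/- arXiv:1411.4268 — 5 statements merged into one kernel-verified Lean document; each statement's English description precedes it below -/
import Mathlib

section
/- For any real α > -1 and any y > 0, the integral over ℝⁿ of the function x ↦ Γ((α+n+1)/2)/(Γ((α+1)/2)·π^{n/2}) · y^{α+1}/(|x|²+y²)^{(α+n+1)/2} equals 1. -/
/-! Writing `(‖v‖² + c)^(-s) = Γ(s)⁻¹ ∫₀^∞ t^(s-1) e^(-(‖v‖² + c) t) dt` and exchanging the
integrals (in `ℝ≥0∞`, so that Tonelli needs no integrability), the `v`-integral becomes the
Gaussian `(π/t)^(d/2)` and the remaining `t`-integral is again a Gamma integral: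
`∫ (‖v‖² + c)^(-s) dv = π^(d/2) Γ(s - d/2) / Γ(s) · c^(d/2 - s)` on a `d`-dimensional space.
With `d = n`, `s = (α + n + 1)/2` and `c = y²` this is the reciprocal of the normalising
constant. -/

open Real MeasureTheory Set

lemma lintegral_ofReal_eq_ofReal_of_integral_eq {X : Type*} [MeasurableSpace X] {μ : Measure X}
    {f : X → ℝ} {c : ℝ} (hf : 0 ≤ᵐ[μ] f) (hc : c ≠ 0) (h : ∫ x, f x ∂μ = c) :
    ∫⁻ x, ENNReal.ofReal (f x) ∂μ = ENNReal.ofReal c := by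
  rw [← h, ofReal_integral_eq_lintegral_ofReal (.of_integral_ne_zero (h ▸ hc)) hf]

lemma lintegral_rpow_mul_exp_neg_mul_Ioi {a r : ℝ} (ha : 0 < a) (hr : 0 < r) :
    ∫⁻ t in Ioi 0, ENNReal.ofReal (t ^ (a - 1) * exp (-(r * t)))
      = ENNReal.ofReal ((1 / r) ^ a * Gamma a) :=
  lintegral_ofReal_eq_ofReal_of_integral_eq
    (ae_restrict_of_forall_mem measurableSet_Ioi fun t (ht : 0 < t) => by positivity)
    (by have := Gamma_pos_of_pos ha; positivity) (integral_rpow_mul_exp_neg_mul_Ioi ha hr)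

section InnerProductSpace

variable {V : Type*} [NormedAddCommGroup V] [InnerProductSpace ℝ V] [FiniteDimensional ℝ V]
  [MeasurableSpace V] [BorelSpace V]

lemma lintegral_exp_neg_mul_sq_norm {b : ℝ} (hb : 0 < b) :
    ∫⁻ v : V, ENNReal.ofReal (exp (-b * ‖v‖ ^ 2))
      = ENNReal.ofReal ((π / b) ^ (Module.finrank ℝ V / 2 : ℝ)) :=
  lintegral_ofReal_eq_ofReal_of_integral_eq (.of_forall fun _ => (exp_pos _).le)
    (by have := pi_pos; positivity) (GaussianFourier.integral_rexp_neg_mul_sq_norm hb)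

lemma lintegral_exp_neg_mul_sq_norm_add {c t : ℝ} (ht : 0 < t) :
    ∫⁻ v : V, ENNReal.ofReal (exp (-((‖v‖ ^ 2 + c) * t)))
      = ENNReal.ofReal ((π / t) ^ (Module.finrank ℝ V / 2 : ℝ) * exp (-(c * t))) := by
  have hsplit : ∀ v : V, exp (-((‖v‖ ^ 2 + c) * t)) = exp (-(c * t)) * exp (-t * ‖v‖ ^ 2) := by
    intro v; rw [← exp_add]; ring_nf
  simp_rw [hsplit, ENNReal.ofReal_mul (exp_pos _).le]
  rw [lintegral_const_mul' _ _ ENNReal.ofReal_ne_top, lintegral_exp_neg_mul_sq_norm ht,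
    ← ENNReal.ofReal_mul (exp_pos _).le, mul_comm]

lemma lintegral_sq_norm_add_rpow_neg {c s : ℝ} (hc : 0 < c) (hs : Module.finrank ℝ V / 2 < s) :
    ∫⁻ v : V, ENNReal.ofReal ((‖v‖ ^ 2 + c) ^ (-s))
      = ENNReal.ofReal (π ^ (Module.finrank ℝ V / 2 : ℝ) * Gamma (s - Module.finrank ℝ V / 2)
          / Gamma s * (1 / c) ^ (s - Module.finrank ℝ V / 2)) := by
  set d : ℝ := Module.finrank ℝ V / 2
  have hs0 : 0 < s := (by positivity : (0 : ℝ) ≤ _).trans_lt hs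
  have hΓ := Gamma_pos_of_pos hs0
  have hpos : ∀ v : V, 0 < ‖v‖ ^ 2 + c := fun v => by positivity
  calc ∫⁻ v : V, ENNReal.ofReal ((‖v‖ ^ 2 + c) ^ (-s))
      = ∫⁻ v : V, ENNReal.ofReal (Gamma s)⁻¹ *
          ∫⁻ t in Ioi 0, ENNReal.ofReal (t ^ (s - 1) * exp (-((‖v‖ ^ 2 + c) * t))) := by
        refine lintegral_congr fun v => ?_
        rw [lintegral_rpow_mul_exp_neg_mul_Ioi hs0 (hpos v), ← ENNReal.ofReal_mul (by positivity),
          one_div, inv_rpow (hpos v).le, ← rpow_neg (hpos v).le, mul_comm _ (Gamma s),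
          inv_mul_cancel_left₀ hΓ.ne']
    _ = ENNReal.ofReal (Gamma s)⁻¹ *
          ∫⁻ t in Ioi 0,
            ENNReal.ofReal (π ^ d) * ENNReal.ofReal (t ^ (s - d - 1) * exp (-(c * t))) := by
        rw [lintegral_const_mul' _ _ ENNReal.ofReal_ne_top, lintegral_lintegral_swap (by fun_prop)]
        congr 1
        refine setLIntegral_congr_fun measurableSet_Ioi fun t (ht : 0 < t) => ?_
        have hexp : t ^ (s - 1) * ((π / t) ^ d * exp (-(c * t)))
            = π ^ d * (t ^ (s - d - 1) * exp (-(c * t))) := by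
          rw [div_rpow pi_pos.le ht.le, show s - d - 1 = s - 1 - d by ring, rpow_sub ht (s - 1) d]
          ring
        simp only [ENNReal.ofReal_mul (rpow_nonneg ht.le (s - 1))]
        rw [lintegral_const_mul' _ _ ENNReal.ofReal_ne_top, lintegral_exp_neg_mul_sq_norm_add ht,
          ← ENNReal.ofReal_mul (rpow_nonneg ht.le _), hexp, ENNReal.ofReal_mul (by positivity)]
    _ = _ := by
        rw [lintegral_const_mul' _ _ ENNReal.ofReal_ne_top,
          lintegral_rpow_mul_exp_neg_mul_Ioi (sub_pos.2 hs) hc,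
          ← ENNReal.ofReal_mul (by positivity), ← ENNReal.ofReal_mul (by positivity)]
        ring_nf

lemma integral_sq_norm_add_rpow_neg {c s : ℝ} (hc : 0 < c) (hs : Module.finrank ℝ V / 2 < s) :
    ∫ v : V, (‖v‖ ^ 2 + c) ^ (-s)
      = π ^ (Module.finrank ℝ V / 2 : ℝ) * Gamma (s - Module.finrank ℝ V / 2)
          / Gamma s * (1 / c) ^ (s - Module.finrank ℝ V / 2) := by
  have hs0 : 0 < s := (by positivity : (0 : ℝ) ≤ _).trans_lt hs
  have hΓs := Gamma_pos_of_pos hs0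
  have hΓ := Gamma_pos_of_pos (sub_pos.2 hs)
  have hπ := pi_pos
  rw [integral_eq_lintegral_of_nonneg_ae (.of_forall fun v => by positivity)
      (by fun_prop : Measurable fun v : V => (‖v‖ ^ 2 + c) ^ (-s)).aestronglyMeasurable,
    lintegral_sq_norm_add_rpow_neg hc hs, ENNReal.toReal_ofReal (by positivity)]

end InnerProductSpace

theorem stmt0_general (n : ℕ) (α : ℝ) (hα : -1 < α) (y : ℝ) (hy : 0 < y) :
    ∫ x : EuclideanSpace ℝ (Fin n),
      Real.Gamma ((α + n + 1) / 2) / (Real.Gamma ((α + 1) / 2) * Real.pi ^ ((n : ℝ) / 2))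
        * y ^ (α + 1) / (‖x‖ ^ 2 + y ^ 2) ^ ((α + n + 1) / 2) = 1 := by
  have hs : (Module.finrank ℝ (EuclideanSpace ℝ (Fin n)) : ℝ) / 2 < (α + n + 1) / 2 := by
    rw [finrank_euclideanSpace_fin]; linarith
  have hΓs := Gamma_pos_of_pos ((by positivity : (0 : ℝ) ≤ _).trans_lt hs)
  have hΓ := Gamma_pos_of_pos (by linarith : 0 < (α + 1) / 2)
  have hy2 : (1 / y ^ 2) ^ ((α + 1) / 2) = (y ^ (α + 1))⁻¹ := by
    rw [one_div, inv_rpow (by positivity), ← rpow_natCast, ← rpow_mul hy.le]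
    ring_nf
  calc _ = ∫ x : EuclideanSpace ℝ (Fin n),
        Real.Gamma ((α + n + 1) / 2) / (Real.Gamma ((α + 1) / 2) * Real.pi ^ ((n : ℝ) / 2))
          * y ^ (α + 1) * (‖x‖ ^ 2 + y ^ 2) ^ (-((α + n + 1) / 2)) :=
        integral_congr_ae (.of_forall fun x => by
          beta_reduce; rw [rpow_neg (by positivity), div_eq_mul_inv])
    _ = 1 := by
        rw [integral_const_mul, integral_sq_norm_add_rpow_neg (by positivity) hs,
          finrank_euclideanSpace_fin, show (α + n + 1) / 2 - n / 2 = (α + 1) / 2 by ring, hy2]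
        have hπ := pi_pos
        field_simp

theorem stmt0 (n : ℕ) (hn : 1 ≤ n) (α : ℝ) (hα : -1 < α) (y : ℝ) (hy : 0 < y) :
    ∫ x : EuclideanSpace ℝ (Fin n),
      Real.Gamma ((α + n + 1) / 2) / (Real.Gamma ((α + 1) / 2) * Real.pi ^ ((n : ℝ) / 2))
        * y ^ (α + 1) / (‖x‖ ^ 2 + y ^ 2) ^ ((α + n + 1) / 2) = 1 :=
  stmt0_general n α hα y hy
end

section
/- For any real α > -1, the function u(x,y) = y^{α+1}/(|x|²+y²)^{(α+n+1)/2} satisfies the weighted Laplace equation Δ_x u + ∂²u/∂y² - (α/y)·∂u/∂y = 0 at every point (x,y) ∈ ℝⁿ × (0,∞). -/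
/-!
Along each coordinate line the kernel `y^(α+1) R^(-β)`, with `R = |x|² + y²`, is a product of
real powers of a linear and a quadratic polynomial in the line parameter, so its second
derivatives come from the product and chain rules alone. After factoring out
`y^(α-1) R^(-β-2)`, the weighted Laplacian equals `2β y² R (2β - α - n - 1)`, which vanishes
for `β = (α + n + 1)/2`.
-/

open Real Filter Topology

def HasSecondDerivAt (f : ℝ → ℝ) (f₁ f₂ t : ℝ) : Prop :=
  ∃ f' : ℝ → ℝ, (∀ᶠ s in 𝓝 t, HasDerivAt f (f' s) s) ∧ f' t = f₁ ∧ HasDerivAt f' f₂ t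

namespace HasSecondDerivAt

variable {f g : ℝ → ℝ} {f₁ f₂ g₁ g₂ t : ℝ}

theorem hasDerivAt (h : HasSecondDerivAt f f₁ f₂ t) : HasDerivAt f f₁ t := by
  obtain ⟨f', hf, rfl, -⟩ := h
  exact hf.self_of_nhds

theorem deriv_eq (h : HasSecondDerivAt f f₁ f₂ t) : deriv f t = f₁ :=
  h.hasDerivAt.deriv

theorem iteratedDeriv_two_eq (h : HasSecondDerivAt f f₁ f₂ t) : iteratedDeriv 2 f t = f₂ := by
  obtain ⟨f', hf, -, hf'⟩ := h
  have hderiv : deriv f =ᶠ[𝓝 t] f' := hf.mono fun s hs => hs.deriv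
  rw [iteratedDeriv_succ, iteratedDeriv_one, hderiv.deriv_eq, hf'.deriv]

theorem const_add_id (c t : ℝ) : HasSecondDerivAt (fun s => c + s) 1 0 t :=
  ⟨fun _ => 1, .of_forall fun s => (hasDerivAt_id s).const_add c, rfl, hasDerivAt_const t 1⟩

theorem quadratic (c b t : ℝ) :
    HasSecondDerivAt (fun s => c + b * s + s ^ 2) (b + 2 * t) 2 t := by
  refine ⟨fun s => b + 2 * s, .of_forall fun s => ?_, rfl, ?_⟩
  · refine (((hasDerivAt_id s).const_mul b).const_add c |>.add (hasDerivAt_pow 2 s)).congr_deriv ?_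
    simp
  · simpa using ((hasDerivAt_id t).const_mul 2).const_add b

theorem const_mul (c : ℝ) (h : HasSecondDerivAt f f₁ f₂ t) :
    HasSecondDerivAt (fun s => c * f s) (c * f₁) (c * f₂) t := by
  obtain ⟨f', hf, rfl, hf'⟩ := h
  exact ⟨fun s => c * f' s, hf.mono fun s hs => hs.const_mul c, rfl, hf'.const_mul c⟩

theorem mul (hf : HasSecondDerivAt f f₁ f₂ t) (hg : HasSecondDerivAt g g₁ g₂ t) :
    HasSecondDerivAt (fun s => f s * g s) (f₁ * g t + f t * g₁)
      (f₂ * g t + 2 * f₁ * g₁ + f t * g₂) t := by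
  obtain ⟨f', hf, rfl, hf'⟩ := hf
  obtain ⟨g', hg, rfl, hg'⟩ := hg
  refine ⟨fun s => f' s * g s + f s * g' s, (hf.and hg).mono fun s h => h.1.mul h.2, rfl, ?_⟩
  refine ((hf'.mul hg.self_of_nhds).add (hf.self_of_nhds.mul hg')).congr_deriv ?_
  ring

theorem rpow_const (p : ℝ) (h : HasSecondDerivAt f f₁ f₂ t) (ht : 0 < f t) :
    HasSecondDerivAt (fun s => f s ^ p) (p * f₁ * f t ^ (p - 1))
      (p * f₂ * f t ^ (p - 1) + p * (p - 1) * f₁ ^ 2 * f t ^ (p - 2)) t := by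
  obtain ⟨f', hf, rfl, hf'⟩ := h
  have hpos : ∀ᶠ s in 𝓝 t, 0 < f s :=
    hf.self_of_nhds.continuousAt.eventually (lt_mem_nhds ht)
  refine ⟨fun s => f' s * p * f s ^ (p - 1), ?_, by ring, ?_⟩
  · filter_upwards [hf, hpos] with s hs hs₀
    exact hs.rpow_const (Or.inl hs₀.ne')
  · refine ((hf'.mul_const p).mul
      (hf.self_of_nhds.rpow_const (p := p - 1) (Or.inl ht.ne'))).congr_deriv ?_
    rw [show p - 1 - 1 = p - 2 by ring]
    ring

end HasSecondDerivAt

theorem EuclideanSpace.norm_add_smul_single_sq {ι : Type*} [Fintype ι] [DecidableEq ι]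
    (x : EuclideanSpace ℝ ι) (i : ι) (s : ℝ) :
    ‖x + s • EuclideanSpace.single i (1 : ℝ)‖ ^ 2 = ‖x‖ ^ 2 + 2 * x i * s + s ^ 2 := by
  rw [norm_add_sq_real]
  simp [real_inner_smul_right, EuclideanSpace.inner_single_right, norm_smul, sq_abs]
  ring

theorem hasSecondDerivAt_kernel_along_single {ι : Type*} [Fintype ι] [DecidableEq ι]
    (x : EuclideanSpace ℝ ι) (i : ι) {y : ℝ} (α β : ℝ) (hR : 0 < ‖x‖ ^ 2 + y ^ 2) :
    HasSecondDerivAt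
      (fun s => y ^ (α + 1) / (‖x + s • EuclideanSpace.single i (1 : ℝ)‖ ^ 2 + y ^ 2) ^ β)
      (-2 * β * x i * y ^ (α + 1) * (‖x‖ ^ 2 + y ^ 2) ^ (-β - 1))
      (y ^ (α + 1) * (-2 * β * (‖x‖ ^ 2 + y ^ 2) ^ (-β - 1)
        + 4 * β * (β + 1) * x i ^ 2 * (‖x‖ ^ 2 + y ^ 2) ^ (-β - 2))) 0 := by
  have hfun : (fun s => y ^ (α + 1) / (‖x + s • EuclideanSpace.single i (1 : ℝ)‖ ^ 2 + y ^ 2) ^ β)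
      = fun s => y ^ (α + 1) * ((‖x‖ ^ 2 + y ^ 2) + 2 * x i * s + s ^ 2) ^ (-β) := by
    funext s
    rw [div_eq_mul_inv, ← rpow_neg (by positivity), EuclideanSpace.norm_add_smul_single_sq]
    ring_nf
  rw [hfun]
  convert ((HasSecondDerivAt.quadratic _ (2 * x i) 0).rpow_const (-β) (by simpa using hR)).const_mul
    (y ^ (α + 1)) using 1 <;> simp only [mul_zero, add_zero, ne_eq, OfNat.ofNat_ne_zero,
      not_false_eq_true, zero_pow] <;> ring_nf

theorem hasSecondDerivAt_kernel_vertical {r y : ℝ} (α β : ℝ) (hr : 0 ≤ r) (hy : 0 < y) :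
    HasSecondDerivAt (fun s => (y + s) ^ (α + 1) / (r + (y + s) ^ 2) ^ β)
      ((α + 1) * y ^ α * (r + y ^ 2) ^ (-β) - 2 * β * y * y ^ (α + 1) * (r + y ^ 2) ^ (-β - 1))
      (α * (α + 1) * y ^ (α - 1) * (r + y ^ 2) ^ (-β)
        - 4 * β * (α + 1) * y * y ^ α * (r + y ^ 2) ^ (-β - 1)
        + y ^ (α + 1) * (-2 * β * (r + y ^ 2) ^ (-β - 1)
          + 4 * β * (β + 1) * y ^ 2 * (r + y ^ 2) ^ (-β - 2))) 0 := by
  have hfun : (fun s => (y + s) ^ (α + 1) / (r + (y + s) ^ 2) ^ β)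
      = fun s => (y + s) ^ (α + 1) * ((r + y ^ 2) + 2 * y * s + s ^ 2) ^ (-β) := by
    funext s
    rw [div_eq_mul_inv, ← rpow_neg (by positivity)]
    ring_nf
  rw [hfun]
  have hR : 0 < r + y ^ 2 := by positivity
  convert ((HasSecondDerivAt.const_add_id y 0).rpow_const (α + 1) (by simpa using hy)).mul
    ((HasSecondDerivAt.quadratic _ (2 * y) 0).rpow_const (-β) (by simpa using hR)) using 1
    <;> simp only [mul_zero, add_zero, ne_eq, OfNat.ofNat_ne_zero,
      not_false_eq_true, zero_pow] <;> ring_nf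

theorem sum_iteratedDeriv_two_kernel_along_single {ι : Type*} [Fintype ι] [DecidableEq ι]
    (x : EuclideanSpace ℝ ι) {y : ℝ} (α β : ℝ) (hR : 0 < ‖x‖ ^ 2 + y ^ 2) :
    ∑ i, iteratedDeriv 2
        (fun s : ℝ => y ^ (α + 1) / (‖x + s • EuclideanSpace.single i (1 : ℝ)‖ ^ 2 + y ^ 2) ^ β) 0
      = y ^ (α + 1) * ((Fintype.card ι : ℝ) * (-2 * β * (‖x‖ ^ 2 + y ^ 2) ^ (-β - 1))
        + 4 * β * (β + 1) * ‖x‖ ^ 2 * (‖x‖ ^ 2 + y ^ 2) ^ (-β - 2)) := by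
  rw [Finset.sum_congr rfl fun i _ =>
    (hasSecondDerivAt_kernel_along_single x i α β hR).iteratedDeriv_two_eq]
  simp only [mul_add, Finset.sum_add_distrib, Finset.sum_const, Finset.card_univ, nsmul_eq_mul,
    ← Finset.mul_sum, ← Finset.sum_mul, ← EuclideanSpace.real_norm_sq_eq]
  ring

theorem kernel_weighted_laplacian_eq_zero {r y α β m : ℝ} (hr : 0 ≤ r) (hy : 0 < y)
    (hβ : 2 * β = α + m + 1) :
    y ^ (α + 1) * (m * (-2 * β * (r + y ^ 2) ^ (-β - 1))
        + 4 * β * (β + 1) * r * (r + y ^ 2) ^ (-β - 2))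
      + (α * (α + 1) * y ^ (α - 1) * (r + y ^ 2) ^ (-β)
        - 4 * β * (α + 1) * y * y ^ α * (r + y ^ 2) ^ (-β - 1)
        + y ^ (α + 1) * (-2 * β * (r + y ^ 2) ^ (-β - 1)
          + 4 * β * (β + 1) * y ^ 2 * (r + y ^ 2) ^ (-β - 2)))
      - α / y * ((α + 1) * y ^ α * (r + y ^ 2) ^ (-β)
        - 2 * β * y * y ^ (α + 1) * (r + y ^ 2) ^ (-β - 1)) = 0 := by
  have hR : 0 < r + y ^ 2 := by positivity
  have hyα : y ^ α = y ^ (α - 1) * y := by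
    rw [← rpow_add_one hy.ne', sub_add_cancel]
  have hyα₁ : y ^ (α + 1) = y ^ (α - 1) * y * y := by
    rw [rpow_add_one hy.ne', hyα]
  have hRβ₁ : (r + y ^ 2) ^ (-β - 1) = (r + y ^ 2) ^ (-β - 2) * (r + y ^ 2) := by
    rw [← rpow_add_one hR.ne']; ring_nf
  have hRβ : (r + y ^ 2) ^ (-β) = (r + y ^ 2) ^ (-β - 2) * (r + y ^ 2) * (r + y ^ 2) := by
    rw [← hRβ₁, ← rpow_add_one hR.ne']; ring_nf
  have hm : m = 2 * β - α - 1 := by linarith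
  rw [hyα₁, hyα, hRβ₁, hRβ, hm]
  field_simp
  ring

theorem stmt2_general (n : ℕ) (α : ℝ)
    (u : EuclideanSpace ℝ (Fin n) → ℝ → ℝ)
    (hu : u = fun x y => y ^ (α + 1) / (‖x‖ ^ 2 + y ^ 2) ^ ((α + n + 1) / 2)) :
    ∀ (x : EuclideanSpace ℝ (Fin n)) (y : ℝ), 0 < y →
      (∑ i : Fin n,
        iteratedDeriv 2 (fun s : ℝ => u (x + s • EuclideanSpace.single i (1 : ℝ)) y) 0)
      + iteratedDeriv 2 (fun s : ℝ => u x (y + s)) 0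
      - (α / y) * deriv (fun s : ℝ => u x (y + s)) 0 = 0 := by
  intro x y hy
  subst hu
  beta_reduce
  have hR : 0 < ‖x‖ ^ 2 + y ^ 2 := by positivity
  have hvert := hasSecondDerivAt_kernel_vertical α ((α + n + 1) / 2) (sq_nonneg ‖x‖) hy
  rw [sum_iteratedDeriv_two_kernel_along_single x α _ hR, Fintype.card_fin,
    hvert.iteratedDeriv_two_eq, hvert.deriv_eq]
  exact kernel_weighted_laplacian_eq_zero (sq_nonneg _) hy (by ring)

theorem stmt2 (n : ℕ) (hn : 1 ≤ n) (α : ℝ) (hα : -1 < α)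
    (u : EuclideanSpace ℝ (Fin n) → ℝ → ℝ)
    (hu : u = fun x y => y ^ (α + 1) / (‖x‖ ^ 2 + y ^ 2) ^ ((α + n + 1) / 2)) :
    ∀ (x : EuclideanSpace ℝ (Fin n)) (y : ℝ), 0 < y →
      (∑ i : Fin n,
        iteratedDeriv 2 (fun s : ℝ => u (x + s • EuclideanSpace.single i (1 : ℝ)) y) 0)
      + iteratedDeriv 2 (fun s : ℝ => u x (y + s)) 0
      - (α / y) * deriv (fun s : ℝ => u x (y + s)) 0 = 0 :=
  stmt2_general n α u hu
end

section
/- Let α > -1 and w_α(x) = (1+|x|²)^{(α+n+1)/2}. Then there is a constant C (depending on α and n) such that for all y ∈ (0,1) and all t ∈ ℝⁿ, the convolution (K_α(·,y) * w_α^{-1})(t) ≤ C·w_α^{-1}(t). -/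
open Real MeasureTheory

set_option maxHeartbeats 1000000 in
theorem stmt11 (n : ℕ) (hn : 1 ≤ n) (α : ℝ) (hα : -1 < α)
    (K : EuclideanSpace ℝ (Fin n) → ℝ → ℝ)
    (hK : K = fun x y =>
      Real.Gamma ((α + n + 1) / 2) / (Real.Gamma ((α + 1) / 2) * Real.pi ^ ((n : ℝ) / 2))
        * y ^ (α + 1) / (‖x‖ ^ 2 + y ^ 2) ^ ((α + n + 1) / 2)) :
    ∃ C : ℝ, 0 < C ∧ ∀ y ∈ Set.Ioo (0 : ℝ) 1, ∀ t : EuclideanSpace ℝ (Fin n),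
      (∫ x : EuclideanSpace ℝ (Fin n),
          K x y * (1 + ‖t - x‖ ^ 2) ^ (-((α + n + 1) / 2)))
        ≤ C * (1 + ‖t‖ ^ 2) ^ (-((α + n + 1) / 2)) := by
  have hn0 : (0:ℝ) ≤ (n:ℝ) := Nat.cast_nonneg n
  have hα1 : (0:ℝ) < α + 1 := by linarith
  set β : ℝ := (α + n + 1) / 2 with hβdef
  have h2β : 2 * β = α + n + 1 := by rw [hβdef]; ring
  have hβpos : 0 < β := by nlinarith
  -- integrability of the basic decay function
  have hfint : Integrable (fun x : EuclideanSpace ℝ (Fin n) => (1 + ‖x‖ ^ 2) ^ (-β)) := by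
    have h := integrable_rpow_neg_one_add_norm_sq
      (E := EuclideanSpace ℝ (Fin n)) (μ := volume) (r := 2 * β)
      (by rw [finrank_euclideanSpace_fin]; nlinarith)
    simpa [show -(2*β)/2 = -β by ring] using h
  set M : ℝ := ∫ x : EuclideanSpace ℝ (Fin n), (1 + ‖x‖ ^ 2) ^ (-β) with hMdef
  have hM : 0 ≤ M := integral_nonneg fun x => Real.rpow_nonneg (by positivity) _
  set c : ℝ := Real.Gamma β / (Real.Gamma ((α + 1) / 2) * Real.pi ^ ((n : ℝ) / 2)) with hcdef
  have hc : 0 < c := by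
    apply div_pos (Real.Gamma_pos_of_pos hβpos)
    exact mul_pos (Real.Gamma_pos_of_pos (by linarith)) (Real.rpow_pos_of_pos Real.pi_pos _)
  refine ⟨c * M * ((4:ℝ) ^ β + ((28:ℝ)/3) ^ β) + 1, by
      have : 0 ≤ c * M * ((4:ℝ) ^ β + ((28:ℝ)/3) ^ β) :=
        mul_nonneg (mul_nonneg hc.le hM) (by positivity)
      linarith, ?_⟩
  rintro y ⟨hy0, hy1⟩ t
  simp only [hK]
  have hTpos : (0:ℝ) < 1 + ‖t‖ ^ 2 := by positivity
  have hTnn : (0:ℝ) ≤ (1 + ‖t‖ ^ 2) ^ (-β) := Real.rpow_nonneg hTpos.le _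
  -- scaling identity
  have key : ∀ x : EuclideanSpace ℝ (Fin n),
      y ^ (α+1) * (‖x‖ ^ 2 + y ^ 2) ^ (-β)
        = y ^ (-(n:ℝ)) * (1 + ‖y⁻¹ • x‖ ^ 2) ^ (-β) := by
    intro x
    have hA : (0:ℝ) < ‖x‖ ^ 2 + y ^ 2 := by positivity
    have h1 : ‖y⁻¹ • x‖ = y⁻¹ * ‖x‖ := by
      rw [norm_smul, Real.norm_eq_abs, abs_of_pos (inv_pos.2 hy0)]
    have h2 : (1 + ‖y⁻¹ • x‖ ^ 2) = (‖x‖ ^ 2 + y ^ 2) * (y ^ 2)⁻¹ := by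
      rw [h1]; field_simp; ring
    rw [h2, Real.mul_rpow hA.le (by positivity)]
    have h3 : ((y ^ 2)⁻¹ : ℝ) ^ (-β) = y ^ (2 * β) := by
      rw [show ((y ^ 2)⁻¹ : ℝ) = y ^ (-2 : ℝ) by
          rw [Real.rpow_neg hy0.le, Real.rpow_two],
        ← Real.rpow_mul hy0.le]
      norm_num
    rw [h3, show y ^ (-(n:ℝ)) * ((‖x‖ ^ 2 + y ^ 2) ^ (-β) * y ^ (2*β))
        = (y ^ (-(n:ℝ)) * y ^ (2*β)) * (‖x‖ ^ 2 + y ^ 2) ^ (-β) by ring,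
      ← Real.rpow_add hy0]
    congr 2
    rw [h2β]; ring
  have hKint : Integrable
      (fun x : EuclideanSpace ℝ (Fin n) => y ^ (α+1) * (‖x‖ ^ 2 + y ^ 2) ^ (-β)) := by
    simp_rw [key]
    exact ((hfint.comp_smul (inv_ne_zero hy0.ne')).const_mul _)
  have hKval : (∫ x : EuclideanSpace ℝ (Fin n),
      y ^ (α+1) * (‖x‖ ^ 2 + y ^ 2) ^ (-β)) = M := by
    simp_rw [key]
    rw [MeasureTheory.integral_const_mul,
      Measure.integral_comp_inv_smul_of_nonneg volume
        (fun z : EuclideanSpace ℝ (Fin n) => (1 + ‖z‖ ^ 2) ^ (-β)) hy0.le,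
      finrank_euclideanSpace_fin, smul_eq_mul, ← hMdef, ← mul_assoc,
      ← Real.rpow_natCast y n, ← Real.rpow_add hy0]
    norm_num
  -- normal form of the kernel
  have hform : ∀ x : EuclideanSpace ℝ (Fin n),
      c * y ^ (α+1) / (‖x‖ ^ 2 + y ^ 2) ^ β
        = c * (y ^ (α+1) * (‖x‖ ^ 2 + y ^ 2) ^ (-β)) := by
    intro x
    rw [Real.rpow_neg (by positivity)]
    ring
  have hKint' : Integrable
      (fun x : EuclideanSpace ℝ (Fin n) => c * y ^ (α+1) / (‖x‖ ^ 2 + y ^ 2) ^ β) := by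
    simp_rw [hform]; exact hKint.const_mul c
  have hKval' : (∫ x : EuclideanSpace ℝ (Fin n),
      c * y ^ (α+1) / (‖x‖ ^ 2 + y ^ 2) ^ β) = c * M := by
    simp_rw [hform]; rw [MeasureTheory.integral_const_mul, hKval]
  have hgint : Integrable
      (fun x : EuclideanSpace ℝ (Fin n) => (1 + ‖t - x‖ ^ 2) ^ (-β)) :=
    hfint.comp_sub_left t
  have hgval : (∫ x : EuclideanSpace ℝ (Fin n), (1 + ‖t - x‖ ^ 2) ^ (-β)) = M :=
    integral_sub_left_eq_self (fun z : EuclideanSpace ℝ (Fin n) => (1 + ‖z‖ ^ 2) ^ (-β))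
      volume t
  -- pointwise bound
  have hmain : ∀ x : EuclideanSpace ℝ (Fin n),
      c * y ^ (α+1) / (‖x‖ ^ 2 + y ^ 2) ^ β * (1 + ‖t - x‖ ^ 2) ^ (-β)
        ≤ (1 + ‖t‖ ^ 2) ^ (-β) *
            ((4:ℝ) ^ β * (c * y ^ (α+1) / (‖x‖ ^ 2 + y ^ 2) ^ β)
              + c * ((28:ℝ)/3) ^ β * (1 + ‖t - x‖ ^ 2) ^ (-β)) := by
    intro x
    have hA : (0:ℝ) < ‖x‖ ^ 2 + y ^ 2 := by positivity
    have hD : (0:ℝ) < 1 + ‖t - x‖ ^ 2 := by positivity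
    have hKnn : 0 ≤ c * y ^ (α+1) / (‖x‖ ^ 2 + y ^ 2) ^ β := by
      apply div_nonneg (mul_nonneg hc.le (Real.rpow_nonneg hy0.le _))
        (Real.rpow_nonneg hA.le _)
    have hDnn : (0:ℝ) ≤ (1 + ‖t - x‖ ^ 2) ^ (-β) := Real.rpow_nonneg hD.le _
    by_cases hcase : 1 + ‖t‖ ^ 2 ≤ 4 * (1 + ‖t - x‖ ^ 2)
    · have h1 : (1 + ‖t - x‖ ^ 2) ^ (-β) ≤ (4:ℝ) ^ β * (1 + ‖t‖ ^ 2) ^ (-β) := by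
        have h := Real.rpow_le_rpow hTpos.le hcase hβpos.le
        rw [Real.mul_rpow (by norm_num) hD.le] at h
        have hd := Real.rpow_pos_of_pos hD β
        have ht := Real.rpow_pos_of_pos hTpos β
        rw [Real.rpow_neg hD.le, Real.rpow_neg hTpos.le,
          show (4:ℝ) ^ β * ((1 + ‖t‖ ^ 2) ^ β)⁻¹ = 4 ^ β / (1 + ‖t‖ ^ 2) ^ β from
            (div_eq_mul_inv _ _).symm,
          inv_eq_one_div, div_le_div_iff₀ hd ht]
        nlinarith
      calc c * y ^ (α+1) / (‖x‖ ^ 2 + y ^ 2) ^ β * (1 + ‖t - x‖ ^ 2) ^ (-β)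
          ≤ c * y ^ (α+1) / (‖x‖ ^ 2 + y ^ 2) ^ β * ((4:ℝ) ^ β * (1 + ‖t‖ ^ 2) ^ (-β)) :=
            mul_le_mul_of_nonneg_left h1 hKnn
        _ = (1 + ‖t‖ ^ 2) ^ (-β) * ((4:ℝ) ^ β * (c * y ^ (α+1) / (‖x‖ ^ 2 + y ^ 2) ^ β)) := by
            ring
        _ ≤ _ := by
            apply mul_le_mul_of_nonneg_left _ hTnn
            have : 0 ≤ c * ((28:ℝ)/3) ^ β * (1 + ‖t - x‖ ^ 2) ^ (-β) := by
              apply mul_nonneg (mul_nonneg hc.le (by positivity)) hDnn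
            linarith
    · push_neg at hcase
      have ht3 : 3 < ‖t‖ ^ 2 := by nlinarith [sq_nonneg ‖t - x‖]
      have htx : ‖t - x‖ < ‖t‖ / 2 := by
        nlinarith [norm_nonneg (t - x), norm_nonneg t]
      have h4 : ‖t‖ ≤ ‖t - x‖ + ‖x‖ := by
        simpa using norm_add_le (t - x) x
      have hx2 : ‖t‖ ^ 2 / 4 < ‖x‖ ^ 2 := by nlinarith [norm_nonneg (t - x), norm_nonneg t]
      have hAT : (3/28 : ℝ) * (1 + ‖t‖ ^ 2) ≤ ‖x‖ ^ 2 + y ^ 2 := by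
        nlinarith [sq_nonneg y]
      have hKb : c * y ^ (α+1) / (‖x‖ ^ 2 + y ^ 2) ^ β
          ≤ c * ((28:ℝ)/3) ^ β * (1 + ‖t‖ ^ 2) ^ (-β) := by
        have hy_le : y ^ (α+1) ≤ 1 := Real.rpow_le_one hy0.le hy1.le hα1.le
        have hAr : ((3/28 : ℝ)) ^ β * (1 + ‖t‖ ^ 2) ^ β ≤ (‖x‖ ^ 2 + y ^ 2) ^ β := by
          rw [← Real.mul_rpow (by norm_num) hTpos.le]
          exact Real.rpow_le_rpow (by positivity) hAT hβpos.le
        have hden : (0:ℝ) < ((3/28 : ℝ)) ^ β * (1 + ‖t‖ ^ 2) ^ β :=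
          mul_pos (Real.rpow_pos_of_pos (by norm_num) _) (Real.rpow_pos_of_pos hTpos _)
        have step : c * y ^ (α+1) / (‖x‖ ^ 2 + y ^ 2) ^ β
            ≤ c / (((3/28 : ℝ)) ^ β * (1 + ‖t‖ ^ 2) ^ β) := by
          apply div_le_div₀ (le_of_lt hc) _ hden hAr
          nlinarith [Real.rpow_nonneg hy0.le (α+1)]
        refine step.trans (le_of_eq ?_)
        have h283 : ((28:ℝ)/3) ^ β = (((3:ℝ)/28) ^ β)⁻¹ := by
          rw [show ((28:ℝ)/3) = ((3:ℝ)/28)⁻¹ by norm_num,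
            Real.inv_rpow (by norm_num : (0:ℝ) ≤ 3/28)]
        rw [Real.rpow_neg hTpos.le, div_eq_mul_inv, mul_inv, h283]
        ring
      calc c * y ^ (α+1) / (‖x‖ ^ 2 + y ^ 2) ^ β * (1 + ‖t - x‖ ^ 2) ^ (-β)
          ≤ (c * ((28:ℝ)/3) ^ β * (1 + ‖t‖ ^ 2) ^ (-β)) * (1 + ‖t - x‖ ^ 2) ^ (-β) :=
            mul_le_mul_of_nonneg_right hKb hDnn
        _ = (1 + ‖t‖ ^ 2) ^ (-β) * (c * ((28:ℝ)/3) ^ β * (1 + ‖t - x‖ ^ 2) ^ (-β)) := by ring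
        _ ≤ _ := by
            apply mul_le_mul_of_nonneg_left _ hTnn
            have : 0 ≤ (4:ℝ) ^ β * (c * y ^ (α+1) / (‖x‖ ^ 2 + y ^ 2) ^ β) :=
              mul_nonneg (by positivity) hKnn
            linarith
  -- assemble
  have hGint : Integrable (fun x : EuclideanSpace ℝ (Fin n) =>
      (1 + ‖t‖ ^ 2) ^ (-β) *
        ((4:ℝ) ^ β * (c * y ^ (α+1) / (‖x‖ ^ 2 + y ^ 2) ^ β)
          + c * ((28:ℝ)/3) ^ β * (1 + ‖t - x‖ ^ 2) ^ (-β))) :=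
    (((hKint'.const_mul _).add (hgint.const_mul _)).const_mul _)
  have hnonneg : ∀ x : EuclideanSpace ℝ (Fin n),
      0 ≤ c * y ^ (α+1) / (‖x‖ ^ 2 + y ^ 2) ^ β * (1 + ‖t - x‖ ^ 2) ^ (-β) := by
    intro x
    apply mul_nonneg _ (Real.rpow_nonneg (by positivity) _)
    apply div_nonneg (mul_nonneg hc.le (Real.rpow_nonneg hy0.le _))
      (Real.rpow_nonneg (by positivity) _)
  calc (∫ x : EuclideanSpace ℝ (Fin n),
        c * y ^ (α+1) / (‖x‖ ^ 2 + y ^ 2) ^ β * (1 + ‖t - x‖ ^ 2) ^ (-β))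
      ≤ ∫ x : EuclideanSpace ℝ (Fin n),
          (1 + ‖t‖ ^ 2) ^ (-β) *
            ((4:ℝ) ^ β * (c * y ^ (α+1) / (‖x‖ ^ 2 + y ^ 2) ^ β)
              + c * ((28:ℝ)/3) ^ β * (1 + ‖t - x‖ ^ 2) ^ (-β)) :=
        integral_mono_of_nonneg (Filter.Eventually.of_forall hnonneg) hGint
          (Filter.Eventually.of_forall hmain)
    _ = (1 + ‖t‖ ^ 2) ^ (-β) * ((4:ℝ) ^ β * (c * M) + c * ((28:ℝ)/3) ^ β * M) := by
        rw [MeasureTheory.integral_const_mul, integral_add (hKint'.const_mul _) (hgint.const_mul _),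
          MeasureTheory.integral_const_mul, MeasureTheory.integral_const_mul, hKval', hgval]
    _ ≤ (c * M * ((4:ℝ) ^ β + ((28:ℝ)/3) ^ β) + 1) * (1 + ‖t‖ ^ 2) ^ (-β) := by
        have h1 : (4:ℝ) ^ β * (c * M) + c * ((28:ℝ)/3) ^ β * M
            ≤ c * M * ((4:ℝ) ^ β + ((28:ℝ)/3) ^ β) + 1 := by nlinarith
        nlinarith [mul_le_mul_of_nonneg_left h1 hTnn]
end

section
/- Let α > -1. For φ a Schwartz function on ℝⁿ, define K_{α,y}*φ(x) = ∫ K_α(x-t,y)φ(t)dt. Then for every y > 0 there is a constant C (depending on α, n, y, and φ) such that |K_{α,y}*φ(x)| ≤ C·(1 + |x|²/y²)^{-(α+n+1)/2} for all x ∈ ℝⁿ. -/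
set_option maxHeartbeats 1000000


open Real MeasureTheory SchwartzMap

theorem stmt14 (n : ℕ) (hn : 1 ≤ n) (α : ℝ) (hα : -1 < α)
    (K : EuclideanSpace ℝ (Fin n) → ℝ → ℝ)
    (hK : K = fun x y =>
      Real.Gamma ((α + n + 1) / 2) / (Real.Gamma ((α + 1) / 2) * Real.pi ^ ((n : ℝ) / 2))
        * y ^ (α + 1) / (‖x‖ ^ 2 + y ^ 2) ^ ((α + n + 1) / 2))
    (φ : SchwartzMap (EuclideanSpace ℝ (Fin n)) ℝ)
    (y : ℝ) (hy : 0 < y) :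
    ∃ C : ℝ, ∀ x : EuclideanSpace ℝ (Fin n),
      |∫ t : EuclideanSpace ℝ (Fin n), K (x - t) y * φ t|
        ≤ C * (1 + ‖x‖ ^ 2 / y ^ 2) ^ (-((α + n + 1) / 2)) := by
  have hn1 : (1:ℝ) ≤ (n:ℝ) := by exact_mod_cast hn
  set s : ℝ := (α + n + 1) / 2 with hs_def
  have hs : 0 < s := by simp only [hs_def]; linarith
  set c : ℝ := Real.Gamma ((α + n + 1) / 2) / (Real.Gamma ((α + 1) / 2) * Real.pi ^ ((n : ℝ) / 2))
    with hc_def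
  set m : ℕ := ⌈s⌉₊ with hm_def
  -- integrability of the weighted Schwartz function
  have hg_cont : Continuous fun t : EuclideanSpace ℝ (Fin n) => (1 + ‖t‖ ^ 2) ^ s * ‖φ t‖ := by
    apply Continuous.mul
    · exact (continuous_const.add (continuous_norm.pow 2)).rpow_const (fun t => Or.inr hs.le)
    · exact φ.continuous.norm
  have hg_int : Integrable (fun t : EuclideanSpace ℝ (Fin n) => (1 + ‖t‖ ^ 2) ^ s * ‖φ t‖) := by
    have hint : Integrable (fun t : EuclideanSpace ℝ (Fin n) =>
        (2:ℝ)^m * ‖φ t‖ + (2:ℝ)^m * (‖t‖ ^ (2*m) * ‖φ t‖)) :=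
      (φ.integrable.norm.const_mul _).add ((φ.integrable_pow_mul volume (2*m)).const_mul _)
    apply hint.mono' hg_cont.aestronglyMeasurable
    filter_upwards with t
    have h0 : (0:ℝ) ≤ ‖t‖ ^ 2 := sq_nonneg _
    have h1 : (1:ℝ) ≤ 1 + ‖t‖ ^ 2 := by linarith
    have hA : (1 + ‖t‖ ^ 2) ^ s ≤ (1 + ‖t‖ ^ 2) ^ (m:ℝ) :=
      Real.rpow_le_rpow_of_exponent_le h1 (Nat.le_ceil s)
    rw [Real.rpow_natCast] at hA
    have hB : (1 + ‖t‖ ^ 2) ^ m ≤ 2 ^ (m-1) * (1 ^ m + (‖t‖ ^ 2) ^ m) :=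
      add_pow_le zero_le_one h0 m
    have hC : (2:ℝ) ^ (m-1) ≤ 2 ^ m := pow_le_pow_right₀ one_le_two (Nat.sub_le m 1)
    have hnn : (0:ℝ) ≤ (1 + ‖t‖ ^ 2) ^ s * ‖φ t‖ :=
      mul_nonneg (Real.rpow_nonneg (by linarith) _) (norm_nonneg _)
    rw [Real.norm_eq_abs, abs_of_nonneg hnn]
    have hpm : ‖t‖ ^ (2*m) = (‖t‖ ^ 2) ^ m := by rw [pow_mul]
    have h2 : (1 + ‖t‖ ^ 2) ^ s ≤ 2 ^ m * (1 + (‖t‖ ^ 2) ^ m) := by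
      calc (1 + ‖t‖ ^ 2) ^ s ≤ (1 + ‖t‖ ^ 2) ^ m := hA
        _ ≤ 2 ^ (m-1) * (1 ^ m + (‖t‖ ^ 2) ^ m) := hB
        _ ≤ 2 ^ m * (1 + (‖t‖ ^ 2) ^ m) := by
            rw [one_pow]
            have : (0:ℝ) ≤ 1 + (‖t‖ ^ 2) ^ m := by positivity
            nlinarith
    calc (1 + ‖t‖ ^ 2) ^ s * ‖φ t‖ ≤ (2 ^ m * (1 + (‖t‖ ^ 2) ^ m)) * ‖φ t‖ :=
          mul_le_mul_of_nonneg_right h2 (norm_nonneg _)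
      _ = (2:ℝ)^m * ‖φ t‖ + (2:ℝ)^m * (‖t‖ ^ (2*m) * ‖φ t‖) := by rw [hpm]; ring
  set I : ℝ := ∫ t : EuclideanSpace ℝ (Fin n), (1 + ‖t‖ ^ 2) ^ s * ‖φ t‖ with hI_def
  have hI_nonneg : 0 ≤ I :=
    integral_nonneg fun t => mul_nonneg (Real.rpow_nonneg (by positivity) _) (norm_nonneg _)
  set A : ℝ := |c| * y ^ (α + 1) * (min 1 (y^2)) ^ (-s) * 2 ^ s with hA_def
  have hA_nonneg : 0 ≤ A := by
    apply mul_nonneg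
    apply mul_nonneg
    apply mul_nonneg (abs_nonneg _) (Real.rpow_pos_of_pos hy _).le
    · exact Real.rpow_nonneg (le_min zero_le_one (sq_nonneg y)) _
    · exact Real.rpow_nonneg (by norm_num) _
  set M : ℝ := max 1 (1 / y^2) with hM_def
  have hM_pos : 0 < M := lt_max_of_lt_left one_pos
  refine ⟨A * I * M ^ s, fun x => ?_⟩
  have hx2 : (0:ℝ) < 1 + ‖x‖ ^ 2 := by positivity
  -- pointwise bound
  have hpt : ∀ t : EuclideanSpace ℝ (Fin n),
      ‖K (x - t) y * φ t‖ ≤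
        (A * (1 + ‖x‖ ^ 2) ^ (-s)) * ((1 + ‖t‖ ^ 2) ^ s * ‖φ t‖) := by
    intro t
    have ht2 : (0:ℝ) < 1 + ‖t‖ ^ 2 := by positivity
    have hmin : (0:ℝ) < min 1 (y^2) := lt_min one_pos (by positivity)
    set B : ℝ := min 1 (y^2) * ((1 + ‖x‖ ^ 2) / (2 * (1 + ‖t‖ ^ 2))) with hB_def
    have hB_pos : 0 < B := by
      apply mul_pos hmin
      positivity
    have hD_pos : (0:ℝ) < ‖x - t‖ ^ 2 + y ^ 2 := by positivity
    have hBle : B ≤ ‖x - t‖ ^ 2 + y ^ 2 := by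
      have hpeetre : 1 + ‖x‖ ^ 2 ≤ 2 * (1 + ‖x - t‖ ^ 2) * (1 + ‖t‖ ^ 2) := by
        have h2 : ‖x‖ ≤ ‖x - t‖ + ‖t‖ := by
          have := norm_add_le (x - t) t
          simpa using this
        have hu := norm_nonneg (x - t)
        have hv := norm_nonneg t
        have hw := norm_nonneg x
        set u := ‖x - t‖
        set v := ‖t‖
        set w := ‖x‖
        have hw2 : w ^ 2 ≤ 2 * u ^ 2 + 2 * v ^ 2 := by nlinarith [sq_nonneg (u - v)]
        nlinarith [mul_nonneg (sq_nonneg u) (sq_nonneg v)]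
      have hstep : B ≤ min 1 (y^2) * (1 + ‖x - t‖ ^ 2) := by
        rw [hB_def]
        apply mul_le_mul_of_nonneg_left _ hmin.le
        rw [div_le_iff₀ (by positivity)]
        nlinarith
      refine hstep.trans ?_
      have h1 : min 1 (y^2) * (1 + ‖x - t‖ ^ 2) = min 1 (y^2) + min 1 (y^2) * ‖x - t‖ ^ 2 := by ring
      rw [h1]
      have := min_le_left (1:ℝ) (y^2)
      have := min_le_right (1:ℝ) (y^2)
      nlinarith [sq_nonneg ‖x - t‖]
    -- kernel bound
    have hDinv : ((‖x - t‖ ^ 2 + y ^ 2) ^ s)⁻¹ ≤ B ^ (-s) := by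
      rw [← Real.rpow_neg hD_pos.le]
      exact Real.rpow_le_rpow_of_nonpos hB_pos hBle (neg_nonpos.mpr hs.le)
    have hBval : B ^ (-s) =
        (min 1 (y^2)) ^ (-s) * (2 ^ s * (1 + ‖t‖ ^ 2) ^ s * (1 + ‖x‖ ^ 2) ^ (-s)) := by
      rw [hB_def, Real.mul_rpow hmin.le (by positivity)]
      congr 1
      rw [Real.rpow_neg (by positivity), Real.div_rpow hx2.le (by positivity),
        Real.mul_rpow (by norm_num) ht2.le, Real.rpow_neg hx2.le]
      field_simp
    have hKval : ‖K (x - t) y * φ t‖ =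
        |c| * y ^ (α + 1) * ((‖x - t‖ ^ 2 + y ^ 2) ^ s)⁻¹ * ‖φ t‖ := by
      rw [hK]
      simp only [Real.norm_eq_abs, abs_mul, abs_div]
      rw [abs_of_pos (Real.rpow_pos_of_pos hy _), abs_of_pos (Real.rpow_pos_of_pos hD_pos _)]
      rw [div_eq_mul_inv]
    rw [hKval]
    have hfin : ((‖x - t‖ ^ 2 + y ^ 2) ^ s)⁻¹ ≤
        (min 1 (y^2)) ^ (-s) * (2 ^ s * (1 + ‖t‖ ^ 2) ^ s * (1 + ‖x‖ ^ 2) ^ (-s)) :=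
      hBval ▸ hDinv
    have hcy : 0 ≤ |c| * y ^ (α + 1) :=
      mul_nonneg (abs_nonneg _) (Real.rpow_pos_of_pos hy _).le
    calc |c| * y ^ (α + 1) * ((‖x - t‖ ^ 2 + y ^ 2) ^ s)⁻¹ * ‖φ t‖
        ≤ |c| * y ^ (α + 1) *
            ((min 1 (y^2)) ^ (-s) * (2 ^ s * (1 + ‖t‖ ^ 2) ^ s * (1 + ‖x‖ ^ 2) ^ (-s))) * ‖φ t‖ := by
          apply mul_le_mul_of_nonneg_right _ (norm_nonneg _)
          exact mul_le_mul_of_nonneg_left hfin hcy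
      _ = (A * (1 + ‖x‖ ^ 2) ^ (-s)) * ((1 + ‖t‖ ^ 2) ^ s * ‖φ t‖) := by
          rw [hA_def]; ring
  -- integrate
  have hnorm : |∫ t : EuclideanSpace ℝ (Fin n), K (x - t) y * φ t|
      ≤ ∫ t : EuclideanSpace ℝ (Fin n), ‖K (x - t) y * φ t‖ := by
    rw [← Real.norm_eq_abs]
    exact norm_integral_le_integral_norm _
  have hmono : ∫ t : EuclideanSpace ℝ (Fin n), ‖K (x - t) y * φ t‖
      ≤ ∫ t : EuclideanSpace ℝ (Fin n),
          (A * (1 + ‖x‖ ^ 2) ^ (-s)) * ((1 + ‖t‖ ^ 2) ^ s * ‖φ t‖) := by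
    apply integral_mono_of_nonneg
    · filter_upwards with t; exact norm_nonneg _
    · exact hg_int.const_mul _
    · filter_upwards with t; exact hpt t
  have hval : ∫ t : EuclideanSpace ℝ (Fin n),
      (A * (1 + ‖x‖ ^ 2) ^ (-s)) * ((1 + ‖t‖ ^ 2) ^ s * ‖φ t‖)
      = A * (1 + ‖x‖ ^ 2) ^ (-s) * I := by
    rw [MeasureTheory.integral_const_mul]
  -- compare weights
  have hwt : (1 + ‖x‖ ^ 2) ^ (-s) ≤ M ^ s * (1 + ‖x‖ ^ 2 / y ^ 2) ^ (-s) := by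
    have hxy : (0:ℝ) < 1 + ‖x‖ ^ 2 / y ^ 2 := by positivity
    have hle : 1 + ‖x‖ ^ 2 / y ^ 2 ≤ M * (1 + ‖x‖ ^ 2) := by
      have h1 : (1:ℝ) ≤ M := le_max_left _ _
      have h2 : 1 / y ^ 2 ≤ M := le_max_right _ _
      have h3 : ‖x‖ ^ 2 / y ^ 2 ≤ M * ‖x‖ ^ 2 := by
        rw [div_eq_mul_inv, mul_comm]
        apply mul_le_mul_of_nonneg_right _ (sq_nonneg _)
        rw [← one_div]
        exact h2
      nlinarith [sq_nonneg ‖x‖]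
    have := Real.rpow_le_rpow_of_nonpos hxy hle (neg_nonpos.mpr hs.le)
    rw [Real.mul_rpow hM_pos.le hx2.le, Real.rpow_neg hM_pos.le] at this
    calc (1 + ‖x‖ ^ 2) ^ (-s) = M ^ s * ((M ^ s)⁻¹ * (1 + ‖x‖ ^ 2) ^ (-s)) := by
          rw [← mul_assoc, mul_inv_cancel₀ (ne_of_gt (Real.rpow_pos_of_pos hM_pos _)), one_mul]
      _ ≤ M ^ s * (1 + ‖x‖ ^ 2 / y ^ 2) ^ (-s) :=
          mul_le_mul_of_nonneg_left this (Real.rpow_nonneg hM_pos.le _)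
  calc |∫ t : EuclideanSpace ℝ (Fin n), K (x - t) y * φ t|
      ≤ A * (1 + ‖x‖ ^ 2) ^ (-s) * I := by
        rw [← hval]; exact hnorm.trans hmono
    _ ≤ A * (M ^ s * (1 + ‖x‖ ^ 2 / y ^ 2) ^ (-s)) * I := by
        apply mul_le_mul_of_nonneg_right _ hI_nonneg
        exact mul_le_mul_of_nonneg_left hwt hA_nonneg
    _ = A * I * M ^ s * (1 + ‖x‖ ^ 2 / y ^ 2) ^ (-s) := by ring
end

section
/- Let α > -1 and f ∈ L¹(ℝⁿ, (1+|x|²)^{-(α+n+1)/2}dx). Then the Poisson integral u(x,y) = ∫ K_α(x-η,y)f(η)dη satisfies: for every ε > 0 there exists R such that for all (x,y) with y > 0 and |x|²+y² = r² ≥ R², one has |u(x,y)|·(y/r)ⁿ ≤ ε·r^{α+1}. That is, sup_{S_r}|u(x,y)·cos^n θ| = o(r^{α+1}) as r → ∞. -/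
open Real MeasureTheory Filter Topology

lemma tail_small {E : Type*} [NormedAddCommGroup E] [MeasurableSpace E] [BorelSpace E]
    {μ : Measure E} (g : E → ℝ) (hg : Integrable g μ) {δ : ℝ} (hδ : 0 < δ) :
    ∃ M : ℕ, ∫ x in (Metric.closedBall (0:E) M)ᶜ, g x ∂μ ≤ δ := by
  have hmono : Monotone (fun m : ℕ => Metric.closedBall (0:E) m) := by
    intro a b hab
    exact Metric.closedBall_subset_closedBall (by exact_mod_cast hab)
  have hun : (⋃ m : ℕ, Metric.closedBall (0:E) m) = Set.univ := Metric.iUnion_closedBall_nat _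
  have htend := tendsto_setIntegral_of_monotone (fun m : ℕ => measurableSet_closedBall)
    hmono (by rw [hun]; exact hg.integrableOn)
  rw [hun, Measure.restrict_univ] at htend
  have htend2 : Tendsto (fun m : ℕ => ∫ x in (Metric.closedBall (0:E) m)ᶜ, g x ∂μ) atTop (𝓝 0) := by
    have : ∀ m : ℕ, ∫ x in (Metric.closedBall (0:E) m)ᶜ, g x ∂μ
        = (∫ x, g x ∂μ) - ∫ x in Metric.closedBall (0:E) m, g x ∂μ := by
      intro m
      rw [← integral_add_compl measurableSet_closedBall hg]
      ring
    simp only [this]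
    have := htend.const_sub (∫ x, g x ∂μ)
    simpa using this
  have := (htend2.eventually (eventually_le_nhds hδ)).exists
  obtain ⟨M, hM⟩ := this
  exact ⟨M, hM⟩

lemma near_bound {X e y r : ℝ} (hy : 0 < y) (hr2 : X^2 + y^2 = r^2) (hX : 0 ≤ X)
    (he : 0 ≤ e) (heM : e ≤ r/4) : r^2/16 ≤ (X-e)^2 + y^2 := by
  by_cases h : X ≤ r/2
  · nlinarith
  · nlinarith

lemma far_bound {X e y r : ℝ} (hy : 0 < y) (hr2 : X^2 + y^2 = r^2) (hr : 1 ≤ r)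
    (hX : 0 ≤ X) (he : 0 ≤ e) : y^2/(8*r^2)*(1+e^2) ≤ (X-e)^2 + y^2 := by
  have hrpos : (0:ℝ) < r := lt_of_lt_of_le one_pos hr
  have hy2 : y^2 ≤ r^2 := by nlinarith
  by_cases h : e ≤ 2*r
  · have h1 : 1 + e^2 ≤ 8*r^2 := by nlinarith
    have : y^2/(8*r^2)*(1+e^2) ≤ y^2 := by
      rw [div_mul_eq_mul_div, div_le_iff₀ (by positivity)]
      nlinarith
    nlinarith
  · push_neg at h
    have hXr : X ≤ r := by nlinarith
    have h2 : e - X ≥ e/2 := by nlinarith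
    have h3 : (X-e)^2 ≥ e^2/4 := by nlinarith
    have h4 : 1 ≤ e^2 := by nlinarith
    have hq : y^2/(8*r^2) ≤ 1/8 := by
      rw [div_le_iff₀ (by positivity)]; nlinarith
    have : y^2/(8*r^2)*(1+e^2) ≤ (1/8)*(1+e^2) :=
      mul_le_mul_of_nonneg_right hq (by positivity)
    nlinarith

lemma id2 {r p a : ℝ} (hr : 0 < r) (n : ℕ) (h2p : 2*p = a + n + 1) :
    (16/r^2 : ℝ)^p = 16^p * r^(-(a+n+1)) := by
  rw [div_rpow (by norm_num) (by positivity), ← rpow_natCast r 2, ← rpow_mul hr.le, ← h2p,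
    div_eq_mul_inv, ← rpow_neg hr.le]
  norm_num

lemma id1 {y r p a : ℝ} (hy : 0 < y) (hr : 0 < r) (n : ℕ) (h2p : 2*p = a + n + 1) :
    y^(a+1) * ((8*r^2/y^2)^p * (y/r)^(n:ℝ)) = 8^p * r^(a+1) := by
  have h8 : (8*r^2/y^2 : ℝ)^p = 8^p * r^(2*p) / y^(2*p) := by
    rw [div_rpow (by positivity) (by positivity), mul_rpow (by norm_num) (by positivity),
      ← rpow_natCast r 2, ← rpow_natCast y 2, ← rpow_mul hr.le, ← rpow_mul hy.le]
    norm_num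
  have hyr : (y/r)^(n:ℝ) = y^(n:ℝ) / r^(n:ℝ) := div_rpow hy.le hr.le _
  rw [h8, hyr]
  rw [div_mul_div_comm, mul_div_assoc', div_eq_iff (by positivity)]
  rw [show y^(a+1) * (8^p * r^(2*p) * y^(n:ℝ)) = 8^p * (y^(a+1) * y^(n:ℝ)) * r^(2*p) by ring,
    ← rpow_add hy, show (8:ℝ)^p * r^(a+1) * (y^(2*p) * r^(n:ℝ)) = 8^p * y^(2*p) * (r^(a+1) * r^(n:ℝ)) by ring,
    ← rpow_add hr, h2p]
  ring_nf

lemma id3 {y r a : ℝ} (hy : 0 < y) (hyr : y ≤ r) (ha : 0 ≤ a + 1) (n : ℕ) :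
    y^(a+1) * (y/r)^(n:ℝ) ≤ r^(a+1) := by
  have h1 : y^(a+1) ≤ r^(a+1) := rpow_le_rpow hy.le hyr ha
  have h2 : (y/r)^(n:ℝ) ≤ 1 := rpow_le_one (div_nonneg hy.le (hy.trans_le hyr).le) (div_le_one (hy.trans_le hyr) |>.2 hyr) (by positivity)
  calc y^(a+1) * (y/r)^(n:ℝ) ≤ r^(a+1) * 1 :=
        mul_le_mul h1 h2 (rpow_nonneg (div_nonneg hy.le (hy.trans_le hyr).le) _) (rpow_nonneg (hy.trans_le hyr).le _)
    _ = r^(a+1) := mul_one _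

set_option maxHeartbeats 2000000 in
theorem stmt17 (n : ℕ) (hn : 1 ≤ n) (α : ℝ) (hα : -1 < α)
    (K : EuclideanSpace ℝ (Fin n) → ℝ → ℝ)
    (hK : K = fun x y =>
      Real.Gamma ((α + n + 1) / 2) / (Real.Gamma ((α + 1) / 2) * Real.pi ^ ((n : ℝ) / 2))
        * y ^ (α + 1) / (‖x‖ ^ 2 + y ^ 2) ^ ((α + n + 1) / 2))
    (f : EuclideanSpace ℝ (Fin n) → ℝ)
    (hmeas : Measurable f)
    (hf : Integrable (fun x : EuclideanSpace ℝ (Fin n) =>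
      |f x| * (1 + ‖x‖ ^ 2) ^ (-((α + n + 1) / 2))))
    (u : EuclideanSpace ℝ (Fin n) → ℝ → ℝ)
    (hu : u = fun x y => ∫ η : EuclideanSpace ℝ (Fin n), K (x - η) y * f η) :
    ∀ ε > (0 : ℝ), ∃ R : ℝ, ∀ (x : EuclideanSpace ℝ (Fin n)) (y r : ℝ),
      0 < y → ‖x‖ ^ 2 + y ^ 2 = r ^ 2 → R ≤ r →
      |u x y| * (y / r) ^ (n : ℝ) ≤ ε * r ^ (α + 1) := by
  intro ε hε
  have hn' : (1:ℝ) ≤ (n:ℝ) := by exact_mod_cast hn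
  set p : ℝ := (α + (n:ℝ) + 1) / 2 with hp_def
  have hp : 0 < p := by rw [hp_def]; linarith
  have h2p : 2 * p = α + (n:ℝ) + 1 := by rw [hp_def]; ring
  set c : ℝ := Real.Gamma p / (Real.Gamma ((α + 1) / 2) * Real.pi ^ ((n : ℝ) / 2)) with hc_def
  have hc : 0 < c := div_pos (Real.Gamma_pos_of_pos hp)
    (mul_pos (Real.Gamma_pos_of_pos (by linarith)) (rpow_pos_of_pos Real.pi_pos _))
  set g : EuclideanSpace ℝ (Fin n) → ℝ := fun η => |f η| * (1 + ‖η‖ ^ 2) ^ (-p) with hg_def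
  have hg : Integrable g := hf
  have hgnn : ∀ η, 0 ≤ g η := fun η => by
    rw [hg_def]; exact mul_nonneg (abs_nonneg _) (rpow_nonneg (by positivity) _)
  set I : ℝ := ∫ η, g η with hI_def
  have hInn : 0 ≤ I := integral_nonneg hgnn
  have hKval : ∀ z y', K z y' = c * y' ^ (α+1) / (‖z‖ ^ 2 + y' ^ 2) ^ p := fun z y' => by
    rw [hK]
  have h8p : (0:ℝ) < (8:ℝ) ^ p := rpow_pos_of_pos (by norm_num) _
  have hδ : 0 < ε/2/(c * 8 ^ p) := div_pos (half_pos hε) (mul_pos hc h8p)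
  obtain ⟨M, hM⟩ := tail_small g hg hδ
  set C₁ : ℝ := c * 16 ^ p * (1 + (M:ℝ) ^ 2) ^ p * I with hC₁_def
  have hC₁nn : 0 ≤ C₁ := by
    rw [hC₁_def]
    exact mul_nonneg (mul_nonneg (mul_nonneg hc.le (rpow_nonneg (by norm_num) _))
      (rpow_nonneg (by positivity) _)) hInn
  have htendR : Filter.Tendsto (fun t : ℝ => C₁ * t ^ (-(α + (n:ℝ) + 1))) Filter.atTop (nhds 0) := by
    have h := tendsto_rpow_neg_atTop (y := α + (n:ℝ) + 1) (by linarith)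
    simpa using h.const_mul C₁
  obtain ⟨R₁, hR₁⟩ := Filter.eventually_atTop.mp
    (htendR.eventually (eventually_le_nhds (half_pos hε)))
  refine ⟨max 1 (max (4 * (M:ℝ)) R₁), ?_⟩
  intro x y r hy hr2 hRr
  have hr1 : 1 ≤ r := le_trans (le_max_left _ _) hRr
  have hrM : 4 * (M:ℝ) ≤ r := le_trans ((le_max_left _ _).trans (le_max_right _ _)) hRr
  have hR1r : R₁ ≤ r := le_trans ((le_max_right _ _).trans (le_max_right _ _)) hRr
  have hrpos : 0 < r := lt_of_lt_of_le one_pos hr1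
  have hy2r2 : y ^ 2 ≤ r ^ 2 := by nlinarith [sq_nonneg ‖x‖]
  have hyr : y ≤ r := by nlinarith
  have hcy : 0 ≤ c * y ^ (α+1) := mul_nonneg hc.le (rpow_nonneg hy.le _)
  set A : ℝ := c * y ^ (α+1) * (16 / r ^ 2) ^ p with hA_def
  set B : ℝ := c * y ^ (α+1) * (8 * r ^ 2 / y ^ 2) ^ p with hB_def
  have hAnn : 0 ≤ A := mul_nonneg hcy (rpow_nonneg (by positivity) _)
  have hBnn : 0 ≤ B := mul_nonneg hcy (rpow_nonneg (by positivity) _)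
  set φ₁ : EuclideanSpace ℝ (Fin n) → ℝ :=
    (Metric.closedBall (0 : EuclideanSpace ℝ (Fin n)) M).indicator (fun η => A * |f η|) with hφ₁_def
  set φ₂ : EuclideanSpace ℝ (Fin n) → ℝ :=
    ((Metric.closedBall (0 : EuclideanSpace ℝ (Fin n)) M)ᶜ).indicator (fun η => B * g η) with hφ₂_def
  -- pointwise comparison of |f| with g on the ball
  have hfg : ∀ η : EuclideanSpace ℝ (Fin n), ‖η‖ ≤ (M:ℝ) →
      |f η| ≤ (1 + (M:ℝ) ^ 2) ^ p * g η := by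
    intro η hηM
    have hpos : (0:ℝ) < 1 + ‖η‖ ^ 2 := by positivity
    have hone : (1:ℝ) ≤ (1 + (M:ℝ) ^ 2) ^ p * (1 + ‖η‖ ^ 2) ^ (-p) := by
      rw [rpow_neg hpos.le, ← div_eq_mul_inv, le_div_iff₀ (rpow_pos_of_pos hpos p)]
      simpa using rpow_le_rpow hpos.le (by nlinarith [norm_nonneg η]) hp.le
    calc |f η| = 1 * |f η| := (one_mul _).symm
      _ ≤ ((1 + (M:ℝ) ^ 2) ^ p * (1 + ‖η‖ ^ 2) ^ (-p)) * |f η| :=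
          mul_le_mul_of_nonneg_right hone (abs_nonneg _)
      _ = (1 + (M:ℝ) ^ 2) ^ p * g η := by rw [hg_def]; ring
  have hfball : IntegrableOn (fun η => A * |f η|)
      (Metric.closedBall (0 : EuclideanSpace ℝ (Fin n)) M) := by
    apply Integrable.mono' (((hg.const_mul ((1 + (M:ℝ) ^ 2) ^ p)).const_mul A).integrableOn)
      ((hmeas.abs.const_mul A).aestronglyMeasurable)
    rw [ae_restrict_iff' measurableSet_closedBall]
    filter_upwards with η hη
    have hηM : ‖η‖ ≤ (M:ℝ) := by simpa using hη
    rw [Real.norm_eq_abs, abs_mul, abs_of_nonneg hAnn, abs_abs]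
    exact mul_le_mul_of_nonneg_left (hfg η hηM) hAnn
  have hφ₁i : Integrable φ₁ := hfball.integrable_indicator measurableSet_closedBall
  have hφ₂i : Integrable φ₂ :=
    ((hg.const_mul B).integrableOn).integrable_indicator measurableSet_closedBall.compl
  have hpt : ∀ η, ‖K (x - η) y * f η‖ ≤ φ₁ η + φ₂ η := by
    intro η
    have hD : (0:ℝ) < ‖x - η‖ ^ 2 + y ^ 2 := by positivity
    have hsq : (‖x‖ - ‖η‖) ^ 2 ≤ ‖x - η‖ ^ 2 := by
      have h1 := abs_norm_sub_norm_le x η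
      calc (‖x‖ - ‖η‖) ^ 2 = |‖x‖ - ‖η‖| ^ 2 := (sq_abs _).symm
        _ ≤ ‖x - η‖ ^ 2 := pow_le_pow_left₀ (abs_nonneg _) h1 2
    have hKnn : 0 ≤ c * y ^ (α+1) / (‖x - η‖ ^ 2 + y ^ 2) ^ p :=
      div_nonneg hcy (rpow_nonneg hD.le _)
    rw [hKval, Real.norm_eq_abs, abs_mul, abs_of_nonneg hKnn]
    by_cases hball : η ∈ Metric.closedBall (0 : EuclideanSpace ℝ (Fin n)) (M:ℝ)
    · have hφ₂0 : φ₂ η = 0 := by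
        rw [hφ₂_def]; exact Set.indicator_of_notMem (by simpa using hball) _
      have hφ₁v : φ₁ η = A * |f η| := by
        rw [hφ₁_def]; exact Set.indicator_of_mem hball _
      rw [hφ₁v, hφ₂0, add_zero]
      have hηM : ‖η‖ ≤ (M:ℝ) := by simpa using hball
      have hnear : r ^ 2 / 16 ≤ ‖x - η‖ ^ 2 + y ^ 2 := by
        have := near_bound hy hr2 (norm_nonneg x) (norm_nonneg η) (by linarith)
        nlinarith
      have hinv : ((‖x - η‖ ^ 2 + y ^ 2) ^ p)⁻¹ ≤ (16 / r ^ 2) ^ p := by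
        rw [show (16 / r ^ 2 : ℝ) = (r ^ 2 / 16)⁻¹ by rw [inv_div],
          inv_rpow (by positivity)]
        exact inv_anti₀ (rpow_pos_of_pos (by positivity) p)
          (rpow_le_rpow (by positivity) hnear hp.le)
      rw [div_eq_mul_inv, hA_def]
      exact mul_le_mul_of_nonneg_right (mul_le_mul_of_nonneg_left hinv hcy) (abs_nonneg _)
    · have hφ₁0 : φ₁ η = 0 := by
        rw [hφ₁_def]; exact Set.indicator_of_notMem hball _
      have hφ₂v : φ₂ η = B * g η := by
        rw [hφ₂_def]; exact Set.indicator_of_mem (by simpa using hball) _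
      rw [hφ₁0, hφ₂v, zero_add]
      have hfar : y ^ 2 / (8 * r ^ 2) * (1 + ‖η‖ ^ 2) ≤ ‖x - η‖ ^ 2 + y ^ 2 := by
        have := far_bound hy hr2 hr1 (norm_nonneg x) (norm_nonneg η)
        nlinarith
      have key : ((‖x - η‖ ^ 2 + y ^ 2) ^ p)⁻¹ ≤ (8 * r ^ 2 / y ^ 2) ^ p * (1 + ‖η‖ ^ 2) ^ (-p) := by
        have e1 : (8 * r ^ 2 / y ^ 2 : ℝ) ^ p * (1 + ‖η‖ ^ 2) ^ (-p)
            = ((y ^ 2 / (8 * r ^ 2) * (1 + ‖η‖ ^ 2)) ^ p)⁻¹ := by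
          rw [rpow_neg (by positivity), mul_rpow (by positivity) (by positivity), mul_inv,
            show (8 * r ^ 2 / y ^ 2 : ℝ) = (y ^ 2 / (8 * r ^ 2))⁻¹ by rw [inv_div],
            inv_rpow (by positivity)]
        rw [e1]
        exact inv_anti₀ (rpow_pos_of_pos (by positivity) p)
          (rpow_le_rpow (by positivity) hfar hp.le)
      calc c * y ^ (α+1) / (‖x - η‖ ^ 2 + y ^ 2) ^ p * |f η|
          ≤ c * y ^ (α+1) * ((8 * r ^ 2 / y ^ 2) ^ p * (1 + ‖η‖ ^ 2) ^ (-p)) * |f η| := by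
            rw [div_eq_mul_inv]
            exact mul_le_mul_of_nonneg_right (mul_le_mul_of_nonneg_left key hcy) (abs_nonneg _)
        _ = B * g η := by rw [hB_def, hg_def]; ring
  have hub : |u x y| ≤ ∫ η, (φ₁ η + φ₂ η) := by
    rw [hu]
    calc |∫ η, K (x - η) y * f η| = ‖∫ η, K (x - η) y * f η‖ := (Real.norm_eq_abs _).symm
      _ ≤ ∫ η, (φ₁ η + φ₂ η) := norm_integral_le_of_norm_le (hφ₁i.add hφ₂i) (ae_of_all _ hpt)
  have hsplit : (∫ η, (φ₁ η + φ₂ η)) = (∫ η, φ₁ η) + ∫ η, φ₂ η := integral_add hφ₁i hφ₂i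
  have hI₁ : (∫ η, φ₁ η) ≤ A * ((1 + (M:ℝ) ^ 2) ^ p * I) := by
    rw [hφ₁_def, integral_indicator measurableSet_closedBall]
    calc (∫ η in Metric.closedBall (0 : EuclideanSpace ℝ (Fin n)) M, A * |f η|)
        ≤ ∫ η in Metric.closedBall (0 : EuclideanSpace ℝ (Fin n)) M,
            A * ((1 + (M:ℝ) ^ 2) ^ p * g η) := by
          apply setIntegral_mono_on hfball (((hg.const_mul _).const_mul A).integrableOn)
            measurableSet_closedBall
          intro η hη
          exact mul_le_mul_of_nonneg_left (hfg η (by simpa using hη)) hAnn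
      _ ≤ ∫ η, A * ((1 + (M:ℝ) ^ 2) ^ p * g η) := by
          apply setIntegral_le_integral ((hg.const_mul _).const_mul A)
          filter_upwards with η
          exact mul_nonneg hAnn (mul_nonneg (rpow_nonneg (by positivity) _) (hgnn η))
      _ = A * ((1 + (M:ℝ) ^ 2) ^ p * I) := by
          rw [integral_const_mul, integral_const_mul]
  have hI₂ : (∫ η, φ₂ η) ≤ B * (ε/2/(c * 8 ^ p)) := by
    rw [hφ₂_def, integral_indicator measurableSet_closedBall.compl, integral_const_mul]
    exact mul_le_mul_of_nonneg_left hM hBnn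
  have hIneq : |u x y| ≤ A * ((1 + (M:ℝ) ^ 2) ^ p * I) + B * (ε/2/(c * 8 ^ p)) := by
    rw [hsplit] at hub
    linarith
  have hyn : 0 ≤ (y / r) ^ (n:ℝ) := rpow_nonneg (div_nonneg hy.le hrpos.le) _
  have ht2 : B * (y / r) ^ (n:ℝ) * (ε/2/(c * 8 ^ p)) = ε/2 * r ^ (α+1) := by
    have hid := id1 (a := α) hy hrpos n h2p
    have e : B * (y / r) ^ (n:ℝ) = c * (8 ^ p * r ^ (α+1)) := by
      rw [hB_def]
      calc c * y ^ (α+1) * (8 * r ^ 2 / y ^ 2) ^ p * (y / r) ^ (n:ℝ)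
          = c * (y ^ (α+1) * ((8 * r ^ 2 / y ^ 2) ^ p * (y / r) ^ (n:ℝ))) := by ring
        _ = c * (8 ^ p * r ^ (α+1)) := by rw [hid]
    rw [e]
    field_simp
  have ht1 : A * ((1 + (M:ℝ) ^ 2) ^ p * I) * (y / r) ^ (n:ℝ) ≤ ε/2 * r ^ (α+1) := by
    have e : A * ((1 + (M:ℝ) ^ 2) ^ p * I) * (y / r) ^ (n:ℝ)
        = (C₁ * r ^ (-(α + (n:ℝ) + 1))) * (y ^ (α+1) * (y / r) ^ (n:ℝ)) := by
      rw [hA_def, hC₁_def, id2 hrpos n h2p]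
      ring
    rw [e]
    calc (C₁ * r ^ (-(α + (n:ℝ) + 1))) * (y ^ (α+1) * (y / r) ^ (n:ℝ))
        ≤ (C₁ * r ^ (-(α + (n:ℝ) + 1))) * r ^ (α+1) :=
          mul_le_mul_of_nonneg_left (id3 hy hyr (by linarith) n)
            (mul_nonneg hC₁nn (rpow_nonneg hrpos.le _))
      _ ≤ ε/2 * r ^ (α+1) :=
          mul_le_mul_of_nonneg_right (hR₁ r hR1r) (rpow_nonneg hrpos.le _)
  calc |u x y| * (y / r) ^ (n:ℝ)
      ≤ (A * ((1 + (M:ℝ) ^ 2) ^ p * I) + B * (ε/2/(c * 8 ^ p))) * (y / r) ^ (n:ℝ) :=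
        mul_le_mul_of_nonneg_right hIneq hyn
    _ = A * ((1 + (M:ℝ) ^ 2) ^ p * I) * (y / r) ^ (n:ℝ)
        + B * (y / r) ^ (n:ℝ) * (ε/2/(c * 8 ^ p)) := by ring
    _ ≤ ε/2 * r ^ (α+1) + ε/2 * r ^ (α+1) := by rw [ht2]; exact add_le_add ht1 le_rfl
    _ = ε * r ^ (α+1) := by ring
end
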